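/- arXiv:1804.08147 — 2 statements merged into one kernel-verified Lean document; each statement's English description precedes it below -/
import Mathlib

section
/- For s, t ≥ 2, let G = P_s □ P_t be the grid graph (the Cartesian product of the paths P_s with vertices u_1, ..., u_s and P_t with vertices w_1, ..., w_t). Let S_1 = {(u_1,w_1), (u_1,w_t)}, S_2 = {(u_1,w_1), (u_s,w_1)}, S_3 = {(u_1,w_t), (u_s,w_t)}, and S_4 = {(u_s,w_1), (u_s,w_t)}. Then a set S ⊆ V(G) is a minimum resolving set of G (that is, a resolving set of cardinality dim(G)) if and only if S = S_i for some i ∈ {1, 2, 3, 4}. -/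
open SimpleGraph

variable {V : Type*}

/-- `S` is a resolving set of `G`. -/
def IsResolving (G : SimpleGraph V) (S : Set V) : Prop :=
  ∀ x y : V, x ≠ y → ∃ z ∈ S, G.dist z x ≠ G.dist z y

/-- `S` is a connected resolving set of `G`. -/
def IsConnResolving (G : SimpleGraph V) (S : Set V) : Prop :=
  IsResolving G S ∧ (G.induce S).Connected

/-- The metric dimension of `G`. -/
noncomputable def metricDim (G : SimpleGraph V) : ℕ :=
  sInf {n | ∃ S : Set V, IsResolving G S ∧ S.ncard = n}

/-- The connected metric dimension of `G`. -/
noncomputable def cdim (G : SimpleGraph V) : ℕ :=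
  sInf {n | ∃ S : Set V, IsConnResolving G S ∧ S.ncard = n}

/-- The connected metric dimension of `G` at a vertex `v`. -/
noncomputable def cdimAt (G : SimpleGraph V) (v : V) : ℕ :=
  sInf {n | ∃ S : Set V, IsConnResolving G S ∧ v ∈ S ∧ S.ncard = n}

/-!
Distances in `P_s □ P_t` are ℓ¹-distances of coordinates. A single vertex never resolves the
grid, since two of its neighbours are equidistant from it; so the dimension is `2`. In a
resolving pair `{p, q}` both vertices are corners: a non-extreme coordinate gives `p` three
neighbours, and the grid being bipartite, their distances from `q` take only the two values
`d(q, p) ± 1`. Opposite corners do not resolve, because `d(p, ·) + d(q, ·)` is constant. Two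
corners on a common side do: the sum of the two distances recovers the coordinate along the
other side, and then either distance recovers the remaining coordinate.
-/

namespace SimpleGraph

variable {W : Type*} {G : SimpleGraph V} {H : SimpleGraph W}

theorem Walk.natDist_le_length (f : V → ℕ) (hf : ∀ ⦃x y⦄, G.Adj x y → Nat.dist (f x) (f y) ≤ 1)
    {u v : V} (w : G.Walk u v) : Nat.dist (f u) (f v) ≤ w.length := by
  induction w with
  | nil => simp [Nat.dist_self]
  | @cons x y z hadj _ ih =>
    calc Nat.dist (f x) (f z) ≤ Nat.dist (f x) (f y) + Nat.dist (f y) (f z) :=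
          Nat.dist.triangle_inequality _ _ _
      _ ≤ _ := by rw [Walk.length_cons]; have := hf hadj; omega

theorem pathGraph_dist_le {n : ℕ} :
    ∀ (d : ℕ) {i j : Fin n}, (i : ℕ) + d = j → (pathGraph n).dist i j ≤ d
  | 0, i, j, h => by rw [Fin.ext (by omega : (i : ℕ) = j), dist_self]
  | d + 1, i, j, h => by
    let k : Fin n := ⟨i + d, by omega⟩
    have hkj : (pathGraph n).Adj k j := pathGraph_adj.2 (Or.inl (by simp only [k]; omega))
    calc (pathGraph n).dist i j ≤ (pathGraph n).dist i k + (pathGraph n).dist k j :=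
          hkj.reachable.dist_triangle_right i
      _ ≤ d + 1 := by
          rw [dist_eq_one_iff_adj.2 hkj]
          exact Nat.add_le_add_right (pathGraph_dist_le d rfl) 1

theorem pathGraph_dist {n : ℕ} (i j : Fin n) : (pathGraph n).dist i j = Nat.dist i j := by
  refine le_antisymm ?_ ?_
  · wlog hij : i ≤ j generalizing i j
    · rw [dist_comm, Nat.dist_comm]
      exact this j i (le_of_not_ge hij)
    exact pathGraph_dist_le _ (by rw [Nat.dist_eq_sub_of_le hij]; omega)
  · obtain ⟨w, hw⟩ := (pathGraph_preconnected n i j).exists_walk_length_eq_dist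
    rw [← hw]
    exact w.natDist_le_length _ fun x y hxy ↦ by rw [pathGraph_adj] at hxy; unfold Nat.dist; omega

theorem exists_pathGraph_adj {n : ℕ} (hn : 2 ≤ n) (i : Fin n) : ∃ j, (pathGraph n).Adj i j := by
  by_cases hi : (i : ℕ) = 0
  · exact ⟨⟨1, by omega⟩, pathGraph_adj.2 (Or.inl (by simp only; omega))⟩
  · exact ⟨⟨i - 1, by omega⟩, pathGraph_adj.2 (Or.inr (by simp only; omega))⟩

theorem dist_boxProd (hG : G.Preconnected) (hH : H.Preconnected) (x y : V × W) :
    (G □ H).dist x y = G.dist x.1 y.1 + H.dist x.2 y.2 := by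
  rw [dist, edist_boxProd, ENat.toNat_add (edist_ne_top_iff_reachable.2 (hG _ _))
    (edist_ne_top_iff_reachable.2 (hH _ _)), dist, dist]

end SimpleGraph

theorem Nat.eq_of_dist_endpoint_eq {n a x y : ℕ} (ha : a = 0 ∨ a = n - 1) (hx : x < n)
    (hy : y < n) (h : Nat.dist a x = Nat.dist a y) : x = y := by
  unfold Nat.dist at h
  omega

theorem Nat.dist_add_dist_of_endpoints {n a b x : ℕ} (ha : a = 0 ∨ a = n - 1)
    (hb : b = 0 ∨ b = n - 1) (hab : a ≠ b) (hx : x < n) :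
    Nat.dist a x + Nat.dist b x = n - 1 := by
  unfold Nat.dist
  omega

section Resolving

variable {G : SimpleGraph V}

theorem IsResolving.mono {S T : Set V} (hST : S ⊆ T) (h : IsResolving G S) :
    IsResolving G T := fun x y hxy ↦
  let ⟨z, hz, hne⟩ := h x y hxy
  ⟨z, hST hz, hne⟩

theorem isResolving_pair_iff {p q : V} :
    IsResolving G {p, q} ↔
      ∀ x y, G.dist p x = G.dist p y → G.dist q x = G.dist q y → x = y := by
  constructor
  · intro h x y hp hq
    by_contra hxy
    obtain ⟨z, hz | hz, hne⟩ := h x y hxy <;> subst hz <;> contradiction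
  · intro h x y hxy
    by_contra! hcon
    exact hxy (h x y (hcon p (by simp)) (hcon q (by simp)))

theorem not_isResolving_singleton_of_adj {p x y : V} (hx : G.Adj p x) (hy : G.Adj p y)
    (hxy : x ≠ y) : ¬IsResolving G {p} := fun h ↦ by
  obtain ⟨z, rfl, hne⟩ := h x y hxy
  exact hne (by rw [dist_eq_one_iff_adj.2 hx, dist_eq_one_iff_adj.2 hy])

theorem IsResolving.singleton_of_dist_add_dist_eq {p q : V} {c : ℕ}
    (hc : ∀ x, G.dist p x + G.dist q x = c) (h : IsResolving G {p, q}) : IsResolving G {p} := by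
  intro x y hxy
  obtain ⟨z, hz | hz, hne⟩ := h x y hxy <;> subst hz
  · exact ⟨z, rfl, hne⟩
  · exact ⟨p, rfl, fun hp ↦ hne (by have := hc x; have := hc y; omega)⟩

theorem not_isResolving_pair_of_three_adj {p q x₁ x₂ x₃ : V}
    (hstep : ∀ x, G.Adj p x → G.dist q x = G.dist q p + 1 ∨ G.dist q x + 1 = G.dist q p)
    (h₁ : G.Adj p x₁) (h₂ : G.Adj p x₂) (h₃ : G.Adj p x₃)
    (h₁₂ : x₁ ≠ x₂) (h₁₃ : x₁ ≠ x₃) (h₂₃ : x₂ ≠ x₃) : ¬IsResolving G {p, q} := by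
  rw [isResolving_pair_iff]
  intro h
  have hp {x y : V} (hx : G.Adj p x) (hy : G.Adj p y) : G.dist p x = G.dist p y := by
    rw [dist_eq_one_iff_adj.2 hx, dist_eq_one_iff_adj.2 hy]
  have hpigeon : G.dist q x₁ = G.dist q x₂ ∨ G.dist q x₁ = G.dist q x₃ ∨
      G.dist q x₂ = G.dist q x₃ := by
    have := hstep _ h₁
    have := hstep _ h₂
    have := hstep _ h₃
    omega
  rcases hpigeon with e | e | e
  · exact h₁₂ (h _ _ (hp h₁ h₂) e)
  · exact h₁₃ (h _ _ (hp h₁ h₃) e)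
  · exact h₂₃ (h _ _ (hp h₂ h₃) e)

theorem metricDim_eq_of_isResolving {S : Set V} {k : ℕ} (hS : IsResolving G S)
    (hk : S.ncard = k) (hmin : ∀ T, IsResolving G T → k ≤ T.ncard) : metricDim G = k :=
  le_antisymm (Nat.sInf_le ⟨S, hS, hk⟩)
    (le_csInf ⟨k, S, hS, hk⟩ fun _ ⟨T, hT, hTk⟩ ↦ hTk ▸ hmin T hT)

end Resolving

section Grid

variable {s t : ℕ}

theorem grid_dist (x y : Fin s × Fin t) :
    (pathGraph s □ pathGraph t).dist x y = Nat.dist x.1 y.1 + Nat.dist x.2 y.2 := by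
  rw [dist_boxProd (pathGraph_preconnected s) (pathGraph_preconnected t), pathGraph_dist,
    pathGraph_dist]

theorem grid_dist_of_adj (q : Fin s × Fin t) {p x : Fin s × Fin t}
    (hpx : (pathGraph s □ pathGraph t).Adj p x) :
    (pathGraph s □ pathGraph t).dist q x = (pathGraph s □ pathGraph t).dist q p + 1 ∨
      (pathGraph s □ pathGraph t).dist q x + 1 = (pathGraph s □ pathGraph t).dist q p := by
  simp only [grid_dist]
  rcases boxProd_adj.1 hpx with ⟨h, e⟩ | ⟨h, e⟩ <;> rw [pathGraph_adj] at h <;> rw [e] <;>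
    unfold Nat.dist <;> omega

theorem IsResolving.image_swap {S : Set (Fin s × Fin t)}
    (h : IsResolving (pathGraph s □ pathGraph t) S) :
    IsResolving (pathGraph t □ pathGraph s) (Prod.swap '' S) := by
  intro x y hxy
  obtain ⟨z, hz, hne⟩ := h x.swap y.swap (Prod.swap_injective.ne hxy)
  refine ⟨z.swap, Set.mem_image_of_mem _ hz, ?_⟩
  simpa only [grid_dist, Prod.fst_swap, Prod.snd_swap, add_comm] using hne

theorem not_isResolving_grid_singleton (hs : 2 ≤ s) (ht : 2 ≤ t) (p : Fin s × Fin t) :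
    ¬IsResolving (pathGraph s □ pathGraph t) {p} := by
  obtain ⟨a, ha⟩ := exists_pathGraph_adj hs p.1
  obtain ⟨b, hb⟩ := exists_pathGraph_adj ht p.2
  refine not_isResolving_singleton_of_adj (x := (a, p.2)) (y := (p.1, b))
    (boxProd_adj_left.2 ha) (boxProd_adj_right.2 hb) fun h ↦ ?_
  exact ha.ne (congrArg Prod.fst h).symm

theorem two_le_ncard_of_isResolving_grid (hs : 2 ≤ s) (ht : 2 ≤ t) {S : Set (Fin s × Fin t)}
    (h : IsResolving (pathGraph s □ pathGraph t) S) : 2 ≤ S.ncard := by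
  have : Nonempty (Fin s × Fin t) := ⟨(⟨0, by omega⟩, ⟨0, by omega⟩)⟩
  by_contra! hS
  obtain ⟨p, hp⟩ := (Set.ncard_le_one_iff_subset_singleton).1 (Nat.le_of_lt_succ hS)
  exact not_isResolving_grid_singleton hs ht p (h.mono hp)

theorem fst_eq_zero_or_eq_sub_one_of_isResolving (ht : 2 ≤ t) {p q : Fin s × Fin t}
    (h : IsResolving (pathGraph s □ pathGraph t) {p, q}) :
    (p.1 : ℕ) = 0 ∨ (p.1 : ℕ) = s - 1 := by
  obtain ⟨⟨a, ha⟩, b⟩ := p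
  by_contra! hp
  dsimp only at hp
  obtain ⟨b', hb'⟩ := exists_pathGraph_adj ht b
  refine not_isResolving_pair_of_three_adj (fun _ ↦ grid_dist_of_adj q)
    (x₁ := (⟨a - 1, by omega⟩, b)) (x₂ := (⟨a + 1, by omega⟩, b))
    (boxProd_adj_left.2 (pathGraph_adj.2 (Or.inr ?_)))
    (boxProd_adj_left.2 (pathGraph_adj.2 (Or.inl rfl))) (boxProd_adj_right.2 hb') ?_ ?_ ?_ h
  all_goals simp only [ne_eq, Prod.ext_iff, Fin.ext_iff]; omega

def IsGridCorner (p : Fin s × Fin t) : Prop :=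
  ((p.1 : ℕ) = 0 ∨ (p.1 : ℕ) = s - 1) ∧ ((p.2 : ℕ) = 0 ∨ (p.2 : ℕ) = t - 1)

theorem IsGridCorner.swap {p : Fin s × Fin t} (hp : IsGridCorner p) : IsGridCorner p.swap :=
  ⟨hp.2, hp.1⟩

theorem IsResolving.isGridCorner (hs : 2 ≤ s) (ht : 2 ≤ t) {p q : Fin s × Fin t}
    (h : IsResolving (pathGraph s □ pathGraph t) {p, q}) : IsGridCorner p :=
  ⟨fst_eq_zero_or_eq_sub_one_of_isResolving ht h,
    fst_eq_zero_or_eq_sub_one_of_isResolving hs (q := q.swap)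
      (by simpa [Set.image_pair] using h.image_swap)⟩

theorem isResolving_pair_of_fst_eq {p q : Fin s × Fin t} (hp : IsGridCorner p) (hq : IsGridCorner q)
    (h₁ : p.1 = q.1) (h₂ : p.2 ≠ q.2) : IsResolving (pathGraph s □ pathGraph t) {p, q} := by
  rw [isResolving_pair_iff]
  intro x y hx hy
  simp only [grid_dist, ← h₁] at hx hy
  have hsum (z : Fin t) : Nat.dist p.2 z + Nat.dist q.2 z = t - 1 :=
    Nat.dist_add_dist_of_endpoints hp.2 hq.2 (Fin.val_ne_of_ne h₂) z.isLt
  have hx₁ : x.1 = y.1 := Fin.ext <| Nat.eq_of_dist_endpoint_eq hp.1 x.1.isLt y.1.isLt <| by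
    have := hsum x.2
    have := hsum y.2
    omega
  have hx₂ : x.2 = y.2 := Fin.ext <| Nat.eq_of_dist_endpoint_eq hp.2 x.2.isLt y.2.isLt <| by
    rw [hx₁] at hx
    omega
  exact Prod.ext hx₁ hx₂

theorem not_isResolving_pair_of_opposite_corners (hs : 2 ≤ s) (ht : 2 ≤ t) {p q : Fin s × Fin t}
    (hp : IsGridCorner p) (hq : IsGridCorner q) (h₁ : p.1 ≠ q.1) (h₂ : p.2 ≠ q.2) :
    ¬IsResolving (pathGraph s □ pathGraph t) {p, q} := by
  refine fun h ↦ not_isResolving_grid_singleton hs ht p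
    (h.singleton_of_dist_add_dist_eq (c := s - 1 + (t - 1)) fun x ↦ ?_)
  have := Nat.dist_add_dist_of_endpoints hp.1 hq.1 (Fin.val_ne_of_ne h₁) x.1.isLt
  have := Nat.dist_add_dist_of_endpoints hp.2 hq.2 (Fin.val_ne_of_ne h₂) x.2.isLt
  rw [grid_dist, grid_dist]
  omega

theorem isResolving_grid_pair_iff (hs : 2 ≤ s) (ht : 2 ≤ t) {p q : Fin s × Fin t} (hpq : p ≠ q) :
    IsResolving (pathGraph s □ pathGraph t) {p, q} ↔
      IsGridCorner p ∧ IsGridCorner q ∧ (p.1 = q.1 ∨ p.2 = q.2) := by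
  refine ⟨fun h ↦ ?_, fun ⟨hp, hq, hside⟩ ↦ ?_⟩
  · have hp := h.isGridCorner hs ht
    have hq := (Set.pair_comm p q ▸ h).isGridCorner hs ht
    refine ⟨hp, hq, ?_⟩
    by_contra! hdiag
    exact not_isResolving_pair_of_opposite_corners hs ht hp hq hdiag.1 hdiag.2 h
  · rcases hside with h₁ | h₂
    · exact isResolving_pair_of_fst_eq hp hq h₁ fun h₂ ↦ hpq (Prod.ext h₁ h₂)
    · have := (isResolving_pair_of_fst_eq hp.swap hq.swap h₂ fun h₁ ↦ hpq (Prod.ext h₁ h₂)).image_swap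
      simpa [Set.image_pair] using this

theorem metricDim_grid (hs : 2 ≤ s) (ht : 2 ≤ t) : metricDim (pathGraph s □ pathGraph t) = 2 := by
  let p : Fin s × Fin t := (⟨0, by omega⟩, ⟨0, by omega⟩)
  let q : Fin s × Fin t := (⟨0, by omega⟩, ⟨t - 1, by omega⟩)
  have hpq : p ≠ q := by simp only [p, q, ne_eq, Prod.ext_iff, Fin.ext_iff]; omega
  refine metricDim_eq_of_isResolving ((isResolving_grid_pair_iff hs ht hpq).2 ?_)
    (Set.ncard_pair hpq) fun _ ↦ two_le_ncard_of_isResolving_grid hs ht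
  simp [IsGridCorner, p, q]

end Grid

/-- For `s, t ≥ 2`, in the grid graph `G = P_s □ P_t`, a set
`S ⊆ V(G)` is a minimum resolving set iff `S` is one of the four pairs of corners
`S_1 = {(u_1,w_1),(u_1,w_t)}`, `S_2 = {(u_1,w_1),(u_s,w_1)}`,
`S_3 = {(u_1,w_t),(u_s,w_t)}`, `S_4 = {(u_s,w_1),(u_s,w_t)}`. -/
theorem stmt_17 (s t : ℕ) (hs : 2 ≤ s) (ht : 2 ≤ t)
    (S : Set (Fin s × Fin t)) :
    (IsResolving (pathGraph s □ pathGraph t) S ∧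
        S.ncard = metricDim (pathGraph s □ pathGraph t)) ↔
      (S = {(⟨0, by omega⟩, ⟨0, by omega⟩), (⟨0, by omega⟩, ⟨t - 1, by omega⟩)} ∨
       S = {(⟨0, by omega⟩, ⟨0, by omega⟩), (⟨s - 1, by omega⟩, ⟨0, by omega⟩)} ∨
       S = {(⟨0, by omega⟩, ⟨t - 1, by omega⟩), (⟨s - 1, by omega⟩, ⟨t - 1, by omega⟩)} ∨
       S = {(⟨s - 1, by omega⟩, ⟨0, by omega⟩), (⟨s - 1, by omega⟩, ⟨t - 1, by omega⟩)}) := by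
  rw [metricDim_grid hs ht]
  constructor
  · rintro ⟨hres, hcard⟩
    obtain ⟨p, q, hpq, rfl⟩ := Set.ncard_eq_two.1 hcard
    obtain ⟨⟨hp₁, hp₂⟩, ⟨hq₁, hq₂⟩, hside⟩ := (isResolving_grid_pair_iff hs ht hpq).1 hres
    obtain ⟨⟨a, ha⟩, ⟨b, hb⟩⟩ := p
    obtain ⟨⟨c, hc⟩, ⟨d, hd⟩⟩ := q
    have : s - 1 ≠ 0 := by omega
    have : t - 1 ≠ 0 := by omega
    dsimp only at hp₁ hp₂ hq₁ hq₂ hside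
    rcases hp₁ with rfl | rfl <;> rcases hp₂ with rfl | rfl <;> rcases hq₁ with rfl | rfl <;>
      rcases hq₂ with rfl | rfl <;> simp_all [Set.pair_eq_pair_iff, eq_comm]
  · have hpair {p q : Fin s × Fin t} (hpq : p ≠ q)
        (hcorners : IsGridCorner p ∧ IsGridCorner q ∧ (p.1 = q.1 ∨ p.2 = q.2)) :
        IsResolving (pathGraph s □ pathGraph t) {p, q} ∧ ({p, q} : Set _).ncard = 2 :=
      ⟨(isResolving_grid_pair_iff hs ht hpq).2 hcorners, Set.ncard_pair hpq⟩
    rintro (rfl | rfl | rfl | rfl) <;> apply hpair <;> simp [IsGridCorner, Prod.ext_iff] <;> omega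
end

section
/- Let T be a finite tree (a connected acyclic simple graph) of order n ≥ 2. Then cdim(T) = dim(T) if and only if T is isomorphic to the path P_n on n vertices. -/
open SimpleGraph

variable {V : Type*}

/-! If `cdim T = 1`, the distances from the single vertex `z` of a minimum connected resolving
set are pairwise distinct, and `v ↦ dist z v` lays `T` out as a path; conversely an end vertex
of a path resolves it on its own, so `cdim = dim = 1` for paths.

If a minimum connected resolving set `S` has at least two vertices, send every vertex `v` to its
gate, the vertex of the subtree `S` nearest to `v`: every geodesic from `S` to `v` passes through
it. A leaf in `S` is the gate of no other vertex, and two leaves outside `S` with the same gate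
would be at the same distance from every vertex of `S`; so the gate map is injective on leaves
and `cdim T ≥ #leaves`. On the other hand all leaves but one form a resolving set (beyond any
vertex, seen from any other, lies a leaf), so `dim T ≤ #leaves - 1 < cdim T`. -/

namespace SimpleGraph

def IsLeaf (G : SimpleGraph V) (v : V) : Prop :=
  ∃! w, G.Adj v w

variable {W : Type*} {G : SimpleGraph V} {H : SimpleGraph W} {u v x : V}

theorem Walk.IsPath.append {w : V} {p : G.Walk u v} {q : G.Walk v w} (hp : p.IsPath)
    (hq : q.IsPath) (hpq : ∀ y ∈ p.support, y ∈ q.support → y = v) :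
    (p.append q).IsPath := by
  have hv : v ∉ q.support.tail := by
    have := hq.support_nodup
    rw [← cons_tail_support, List.nodup_cons] at this
    exact this.1
  rw [isPath_def, support_append, List.nodup_append]
  refine ⟨hp.support_nodup, hq.support_nodup.sublist (List.tail_sublist _), ?_⟩
  rintro y hy _ hy' rfl
  exact hv (hpq y hy (List.mem_of_mem_tail hy') ▸ hy')

theorem Reachable.exists_dist_eq_and_dist_eq (h : G.Reachable u v) {a b : ℕ}
    (hab : G.dist u v = a + b) : ∃ x, G.dist u x = a ∧ G.dist x v = b := by
  obtain ⟨p, hp⟩ := h.exists_walk_length_eq_dist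
  refine ⟨p.getVert a, ?_⟩
  have hua := dist_le (p.take a)
  have hav := dist_le (p.drop a)
  have := (p.drop a).reachable.dist_triangle_right u
  rw [Walk.take_length] at hua
  rw [Walk.drop_length] at hav
  omega

theorem Reachable.exists_adj_dist_add_one (h : G.Reachable u v) (huv : u ≠ v) :
    ∃ w, G.Adj u w ∧ G.dist w v + 1 = G.dist u v := by
  have := h.pos_dist_of_ne huv
  obtain ⟨w, huw, hwv⟩ :=
    h.exists_dist_eq_and_dist_eq (a := 1) (b := G.dist u v - 1) (by omega)
  exact ⟨w, dist_eq_one_iff_adj.mp huw, by omega⟩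

theorem IsLeaf.dist_lt_dist_add_dist (hG : G.Connected) {l a b : V} (hl : G.IsLeaf l)
    (ha : a ≠ l) (hb : b ≠ l) : G.dist a b < G.dist a l + G.dist l b := by
  obtain ⟨wa, hwa, hda⟩ := (hG l a).exists_adj_dist_add_one ha.symm
  obtain ⟨wb, hwb, hdb⟩ := (hG l b).exists_adj_dist_add_one hb.symm
  obtain rfl : wa = wb := hl.unique hwa hwb
  have := hG.dist_triangle (u := a) (v := wa) (w := b)
  have := dist_comm (G := G) (u := a) (v := wa)
  have := dist_comm (G := G) (u := a) (v := l)
  omega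

theorem Iso.dist_eq (e : G ≃g H) (u v : V) : H.dist (e u) (e v) = G.dist u v := by
  by_cases h : G.Reachable u v
  · apply le_antisymm
    · obtain ⟨p, hp⟩ := h.exists_walk_length_eq_dist
      simpa [hp] using dist_le (p.map e.toHom)
    · have hr : H.Reachable (e u) (e v) := Iso.reachable_iff.mpr h
      obtain ⟨p, hp⟩ := hr.exists_walk_length_eq_dist
      simpa [hp] using dist_le (p.map e.symm.toHom)
  · rw [dist_eq_zero_of_not_reachable h,
      dist_eq_zero_of_not_reachable (Iso.reachable_iff.not.mpr h)]

theorem pathGraph_val_le_add_length {n : ℕ} {i j : Fin n} (p : (pathGraph n).Walk i j) :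
    j.val ≤ i.val + p.length := by
  induction p with
  | nil => simp
  | cons h _ ih =>
    rw [pathGraph_adj] at h
    rw [Walk.length_cons]
    omega

theorem pathGraph_dist_zero {n : ℕ} (i : Fin (n + 1)) : (pathGraph (n + 1)).dist 0 i = i := by
  apply le_antisymm
  · induction i using Fin.induction with
    | zero => simp
    | succ i ih =>
      have hadj : (pathGraph (n + 1)).Adj i.castSucc i.succ := by simp [pathGraph_adj]
      have := hadj.reachable.dist_triangle_right 0
      rw [dist_eq_one_iff_adj.mpr hadj] at this
      simp only [Fin.val_castSucc, Fin.val_succ] at ih ⊢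
      omega
  · obtain ⟨p, hp⟩ := (pathGraph_connected n).exists_walk_length_eq_dist 0 i
    simpa [hp] using pathGraph_val_le_add_length p

theorem Iso.injective_dist_symm_zero {n : ℕ} (e : G ≃g pathGraph (n + 1)) :
    Function.Injective (G.dist (e.symm 0)) := by
  intro a b hab
  rw [← e.dist_eq, ← e.dist_eq, e.apply_symm_apply, pathGraph_dist_zero,
    pathGraph_dist_zero] at hab
  exact e.injective (Fin.ext hab)

theorem Connected.nonempty_iso_pathGraph [Fintype V] (hG : G.Connected) {z : V}
    (hz : Function.Injective (G.dist z)) : Nonempty (G ≃g pathGraph (Fintype.card V)) := by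
  have hlt (v : V) : G.dist z v < Fintype.card V := by
    obtain ⟨p, hp, hpl⟩ := hG.exists_path_of_dist z v
    exact hpl ▸ hp.length_lt
  let f (v : V) : Fin (Fintype.card V) := ⟨G.dist z v, hlt v⟩
  have hf : Function.Bijective f := by
    refine (Fintype.bijective_iff_injective_and_card f).mpr ⟨fun a b hab => hz ?_, by simp⟩
    simpa [f, Fin.ext_iff] using hab
  have adj_of_succ {a b : V} (hab : G.dist z a + 1 = G.dist z b) : G.Adj a b := by
    obtain ⟨w, hzw, hwb⟩ :=
      (hG z b).exists_dist_eq_and_dist_eq (a := G.dist z a) (b := 1) hab.symm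
    exact hz hzw ▸ dist_eq_one_iff_adj.mp hwb
  refine ⟨⟨Equiv.ofBijective f hf, fun {a b} => ?_⟩⟩
  simp only [Equiv.ofBijective_apply, pathGraph_adj, f]
  refine ⟨?_, fun h => ?_⟩
  · rintro (h | h)
    · exact adj_of_succ h
    · exact (adj_of_succ h).symm
  · have hne : G.dist z a ≠ G.dist z b := hz.ne h.ne
    rcases h.diff_dist_adj (u := z) with h' | h' | h' <;> omega

theorem IsAcyclic.length_eq_dist_of_isPath (hG : G.IsAcyclic) {p : G.Walk u v}
    (hp : p.IsPath) : p.length = G.dist u v := by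
  obtain ⟨q, hq, hql⟩ := p.reachable.exists_path_of_dist
  rw [← hql, Subtype.mk.inj ((hG.subsingleton_path u v).elim ⟨p, hp⟩ ⟨q, hq⟩)]

theorem IsTree.exists_isLeaf_dist_eq_add [Finite V] (hG : G.IsTree) {x y : V} (hxy : x ≠ y) :
    ∃ l, G.IsLeaf l ∧ G.dist y l = G.dist y x + G.dist x l := by
  have hc := hG.connected
  let A := {u | G.dist y u = G.dist y x + G.dist x u}
  obtain ⟨l, hlA, hmax⟩ := Set.exists_max_image A (G.dist x) A.toFinite ⟨x, by simp [A]⟩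
  have hlA : G.dist y l = G.dist y x + G.dist x l := hlA
  refine ⟨l, ?_, hlA⟩
  have hyx := hc.pos_dist_of_ne hxy.symm
  obtain ⟨p, hp, hpl⟩ := hc.exists_path_of_dist y l
  have hpnil : ¬p.Nil := fun h => by
    rw [← h.eq, dist_self] at hlA
    omega
  refine ⟨p.penultimate, p.adj_penultimate hpnil |>.symm, fun w hw => ?_⟩
  by_contra hne
  -- otherwise `w` extends the geodesic from `y` to `l`, and lies farther from `x` than `l`
  have hwp : w ∉ p.support := fun h => hne (hG.isAcyclic.eq_penultimate_of_adj_end hp hw h)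
  have hyw := hG.isAcyclic.length_eq_dist_of_isPath (hp.concat hwp hw)
  rw [Walk.length_concat, hpl] at hyw
  have h1 := hc.dist_triangle (u := y) (v := x) (w := w)
  have h2 := hc.dist_triangle (u := x) (v := l) (w := w)
  rw [dist_eq_one_iff_adj.mpr hw] at h2
  have := hmax w (show G.dist y w = G.dist y x + G.dist x w by omega)
  omega

theorem IsTree.isResolving_setOf_isLeaf_diff [Finite V] (hG : G.IsTree) (l₀ : V) :
    IsResolving G ({l | G.IsLeaf l} \ {l₀}) := by
  intro x y hxy
  have hc := hG.connected
  obtain ⟨lx, hlx, hdx⟩ := hG.exists_isLeaf_dist_eq_add hxy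
  obtain ⟨ly, hly, hdy⟩ := hG.exists_isLeaf_dist_eq_add hxy.symm
  have hxy' := hc.pos_dist_of_ne hxy
  have hyx : G.dist y x = G.dist x y := dist_comm
  have hx : G.dist lx x ≠ G.dist lx y := by rw [dist_comm, dist_comm (u := lx)]; omega
  have hy : G.dist ly x ≠ G.dist ly y := by rw [dist_comm, dist_comm (u := ly)]; omega
  by_cases h : lx = l₀
  · refine ⟨ly, ⟨hly, ?_⟩, hy⟩
    rintro rfl
    rw [h] at hdx
    omega
  · exact ⟨lx, ⟨hlx, h⟩, hx⟩

theorem Preconnected.exists_isPath_of_induce {S : Set V} (hS : (G.induce S).Preconnected)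
    (hu : u ∈ S) (hv : v ∈ S) :
    ∃ p : G.Walk u v, p.IsPath ∧ ∀ y ∈ p.support, y ∈ S := by
  obtain ⟨p, hp, -⟩ := (hS ⟨u, hu⟩ ⟨v, hv⟩).exists_path_of_dist
  have hpS :
      ∀ y ∈ (p.map (Embedding.induce (G := G) S).toHom).support, y ∈ S := by
    simp only [Walk.support_map, List.mem_map]
    rintro _ ⟨y, -, rfl⟩
    exact y.2
  exact ⟨_, hp.map (Embedding.induce (G := G) S).injective, hpS⟩

theorem IsAcyclic.dist_eq_dist_add_dist_of_isMinOn (hG : G.IsAcyclic) {S : Set V}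
    (hS : (G.induce S).Connected) {s z : V} (hs : s ∈ S) (hz : z ∈ S) (hx : G.Reachable s x)
    (hmin : IsMinOn (G.dist · x) S s) : G.dist z x = G.dist z s + G.dist s x := by
  obtain ⟨p, hp, hpS⟩ := hS.preconnected.exists_isPath_of_induce hz hs
  obtain ⟨q, hq, hql⟩ := hx.exists_path_of_dist
  -- a geodesic from the gate `s` to `x` leaves `S` at once
  have hqS : ∀ y ∈ q.support, y ∈ S → y = s := by
    intro y hy hyS
    obtain ⟨q₁, q₂, rfl⟩ := q.mem_support_iff_exists_append.mp hy
    have := isMinOn_iff.mp hmin y hyS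
    have := dist_le q₂
    rw [Walk.length_append] at hql
    exact (Walk.eq_of_length_eq_zero (p := q₁) (by omega)).symm
  have hpq := hp.append hq fun y hyp hyq => hqS y hyq (hpS y hyp)
  rw [← hG.length_eq_dist_of_isPath hpq, Walk.length_append, hG.length_eq_dist_of_isPath hp,
    hG.length_eq_dist_of_isPath hq]

theorem _root_.IsResolving.dist_le_dist_of_isLeaf {S : Set V} (hS : IsResolving G S)
    (hG : G.Connected) {s l : V} (hl : G.IsLeaf l) (hsl : s ≠ l)
    (hgl : ∀ z ∈ S, G.dist z l = G.dist z s + G.dist s l)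
    (hgx : ∀ z ∈ S, G.dist z x = G.dist z s + G.dist s x) : G.dist s x ≤ G.dist s l := by
  by_contra! hlt
  obtain ⟨y, hsy, hyx⟩ := (hG s x).exists_dist_eq_and_dist_eq
    (a := G.dist s l) (b := G.dist s x - G.dist s l) (by omega)
  -- `y` is as far as `l` from every vertex of `S`
  have hyl : y = l := by
    by_contra hne
    obtain ⟨z, hz, hzd⟩ := hS y l hne
    have := hG.dist_triangle (u := z) (v := s) (w := y)
    have := hG.dist_triangle (u := z) (v := y) (w := x)
    have := hgl z hz
    have := hgx z hz
    omega
  rw [hyl] at hyx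
  have hxl : x ≠ l := by rintro rfl; omega
  have := hl.dist_lt_dist_add_dist hG hsl hxl
  have := hG.dist_triangle (u := s) (v := l) (w := x)
  omega

theorem IsTree.not_isMinOn_of_isLeaf (hG : G.IsTree) {S : Set V} (hS : (G.induce S).Connected)
    (hSnt : S.Nontrivial) {l : V} (hl : G.IsLeaf l) (hlS : l ∈ S) (hx : x ∉ S) :
    ¬IsMinOn (G.dist · x) S l := by
  intro hmin
  obtain ⟨t, htS, htl⟩ := hSnt.exists_ne l
  obtain ⟨p, -, hpS⟩ := hS.preconnected.exists_isPath_of_induce hlS htS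
  have hpnil : ¬p.Nil := fun h => htl h.eq.symm
  have hsnd := p.adj_snd hpnil
  have hsndS : p.snd ∈ S := hpS _ (List.mem_of_mem_tail (p.snd_mem_tail_support hpnil))
  have := hG.isAcyclic.dist_eq_dist_add_dist_of_isMinOn hS hlS hsndS (hG.connected l x) hmin
  have hxl : x ≠ l := fun h => hx (h ▸ hlS)
  have := hl.dist_lt_dist_add_dist hG.connected hsnd.ne.symm hxl
  omega

theorem IsTree.ncard_setOf_isLeaf_le [Finite V] (hG : G.IsTree) {S : Set V}
    (hres : IsResolving G S) (hS : (G.induce S).Connected) (hSnt : S.Nontrivial) :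
    {l | G.IsLeaf l}.ncard ≤ S.ncard := by
  have hc := hG.connected
  have exists_gate (v : V) : ∃ s ∈ S, IsMinOn (G.dist · v) S s := by
    obtain ⟨s, hs, hmin⟩ := Set.exists_min_image S (G.dist · v) S.toFinite hSnt.nonempty
    exact ⟨s, hs, isMinOn_iff.mpr hmin⟩
  choose g hgS hgmin using exists_gate
  have hg_self {v : V} (hv : v ∈ S) : g v = v := by
    have := isMinOn_iff.mp (hgmin v) v hv
    rwa [dist_self, Nat.le_zero, hc.dist_eq_zero_iff] at this
  have hg_dist (v z : V) (hz : z ∈ S) : G.dist z v = G.dist z (g v) + G.dist (g v) v :=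
    hG.isAcyclic.dist_eq_dist_add_dist_of_isMinOn hS (hgS v) hz (hc _ _) (hgmin v)
  have eq_of_mem {l₁ l₂ : V} (hl₁ : G.IsLeaf l₁) (h₁ : l₁ ∈ S)
      (hg : g l₁ = g l₂) : l₁ = l₂ := by
    by_contra hne
    have h₂ : l₂ ∉ S := fun h₂ => hne (by rwa [hg_self h₁, hg_self h₂] at hg)
    refine hG.not_isMinOn_of_isLeaf hS hSnt hl₁ h₁ h₂ ?_
    rw [← hg_self h₁, hg]
    exact hgmin l₂
  refine Set.ncard_le_ncard_of_injOn g (fun v _ => hgS v) ?_ S.toFinite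
  intro l₁ hl₁ l₂ hl₂ hg
  by_cases h₁ : l₁ ∈ S
  · exact eq_of_mem hl₁ h₁ hg
  by_cases h₂ : l₂ ∈ S
  · exact (eq_of_mem hl₂ h₂ hg.symm).symm
  have hs₁ : g l₁ ≠ l₁ := fun h => h₁ (h ▸ hgS l₁)
  have hs₂ : g l₂ ≠ l₂ := fun h => h₂ (h ▸ hgS l₂)
  have le₁ := hres.dist_le_dist_of_isLeaf hc hl₁ hs₁ (hg_dist l₁) (hg ▸ hg_dist l₂)
  have le₂ := hres.dist_le_dist_of_isLeaf hc hl₂ hs₂ (hg_dist l₂) (hg ▸ hg_dist l₁)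
  by_contra hne
  obtain ⟨z, hz, hzd⟩ := hres l₁ l₂ hne
  have := hg_dist l₁ z hz
  have := hg_dist l₂ z hz
  rw [hg] at *
  omega

end SimpleGraph

section

variable {G : SimpleGraph V} {S : Set V}

theorem IsResolving.nonempty [Nontrivial V] (hS : IsResolving G S) : S.Nonempty := by
  obtain ⟨x, y, hxy⟩ := exists_pair_ne V
  obtain ⟨z, hz, -⟩ := hS x y hxy
  exact ⟨z, hz⟩

theorem isResolving_univ (hG : G.Connected) : IsResolving G Set.univ := fun x y hxy =>
  ⟨x, trivial, by rw [dist_self]; exact (hG.pos_dist_of_ne hxy).ne⟩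

theorem isResolving_singleton_iff {z : V} :
    IsResolving G {z} ↔ Function.Injective (G.dist z) := by
  refine ⟨fun h x y hxy => ?_, fun h x y hxy => ⟨z, rfl, h.ne hxy⟩⟩
  by_contra hne
  obtain ⟨_, rfl, hz⟩ := h x y hne
  exact hz hxy

theorem isConnResolving_singleton_iff {z : V} :
    IsConnResolving G {z} ↔ Function.Injective (G.dist z) := by
  rw [IsConnResolving, isResolving_singleton_iff, induce_singleton_eq_top,
    and_iff_left connected_top]

theorem metricDim_le_ncard (hS : IsResolving G S) : metricDim G ≤ S.ncard :=
  Nat.sInf_le ⟨S, hS, rfl⟩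

theorem cdim_le_ncard (hS : IsConnResolving G S) : cdim G ≤ S.ncard :=
  Nat.sInf_le ⟨S, hS, rfl⟩

theorem exists_isConnResolving_ncard_eq_cdim (hG : G.Connected) :
    ∃ S, IsConnResolving G S ∧ S.ncard = cdim G := by
  have hne : {n | ∃ S : Set V, IsConnResolving G S ∧ S.ncard = n}.Nonempty :=
    ⟨_, Set.univ, ⟨isResolving_univ hG, (induceUnivIso G).connected_iff.mpr hG⟩, rfl⟩
  exact Nat.sInf_mem hne

theorem metricDim_le_cdim (hG : G.Connected) : metricDim G ≤ cdim G := by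
  obtain ⟨S, hS, hcard⟩ := exists_isConnResolving_ncard_eq_cdim hG
  exact hcard ▸ metricDim_le_ncard hS.1

theorem metricDim_pos [Finite V] [Nontrivial V] (hG : G.Connected) : 0 < metricDim G := by
  have hne : {n | ∃ S : Set V, IsResolving G S ∧ S.ncard = n}.Nonempty :=
    ⟨_, Set.univ, isResolving_univ hG, rfl⟩
  obtain ⟨S, hS, hcard⟩ := Nat.sInf_mem hne
  rw [metricDim, ← hcard]
  exact (Set.ncard_pos S.toFinite).mpr hS.nonempty

theorem SimpleGraph.IsTree.metricDim_lt_ncard (hG : G.IsTree) [Finite V]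
    (hS : IsConnResolving G S) (hSnt : S.Nontrivial) : metricDim G < S.ncard := by
  have hleaves := hG.ncard_setOf_isLeaf_le hS.1 hS.2 hSnt
  obtain ⟨x, -, y, -, hxy⟩ := hSnt
  obtain ⟨l₀, hl₀, -⟩ := hG.exists_isLeaf_dist_eq_add hxy
  have hl₀ : l₀ ∈ {l | G.IsLeaf l} := hl₀
  have hdim := metricDim_le_ncard (hG.isResolving_setOf_isLeaf_diff l₀)
  rw [Set.ncard_sdiff_singleton_of_mem hl₀] at hdim
  have := (Set.ncard_pos (Set.toFinite _)).mpr ⟨l₀, hl₀⟩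
  omega

end

/-- For a finite tree `T` of order `n ≥ 2`, `cdim(T) = dim(T)` iff
`T` is isomorphic to the path `P_n`. -/
theorem stmt_19 {V : Type*} [Fintype V] (T : SimpleGraph V) (hT : T.IsTree)
    (hn : 2 ≤ Fintype.card V) :
    cdim T = metricDim T ↔ Nonempty (T ≃g pathGraph (Fintype.card V)) := by
  have : Nontrivial V := Fintype.one_lt_card_iff_nontrivial.mp hn
  have hc := hT.connected
  constructor
  · intro heq
    obtain ⟨S, hS, hcard⟩ := exists_isConnResolving_ncard_eq_cdim hc
    obtain ⟨z, hz⟩ := hS.1.nonempty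
    rcases S.subsingleton_or_nontrivial with hSs | hSnt
    · rw [hSs.eq_singleton_of_mem hz, isConnResolving_singleton_iff] at hS
      exact hc.nonempty_iso_pathGraph hS
    · have := hT.metricDim_lt_ncard hS hSnt
      omega
  · rintro ⟨e⟩
    obtain ⟨m, hm⟩ := Nat.exists_eq_add_of_le' hn
    rw [hm] at e
    have hz := isConnResolving_singleton_iff.mpr e.injective_dist_symm_zero
    have hcdim : cdim T ≤ 1 := Set.ncard_singleton (e.symm 0) ▸ cdim_le_ncard hz
    have := metricDim_le_cdim hc
    have := metricDim_pos hc
    omega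
end
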